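/- arXiv:1206.5234 — 2 statements merged into one kernel-verified Lean document; each statement's English description precedes it below -/
import Mathlib

section
/- Let (W,S) be a right-angled Coxeter system with S finite and presentation graph Γ = Γ(W,S). Assume: (i) no subset of S spanning a complete subgraph of Γ separates Γ (equivalently, W is one-ended); and (ii) (W,S) has no virtual factor separator. Let g ∈ W and let γ1++γ2 be a reduced word for g such that the subgroup of W generated by lett(γ2) is infinite. Let s, t ∈ S with s ∉ B(g) and t ∉ B(g). Then there exists a walk s = v_0, v_1, ..., v_p = t in Γ (each v_{i} adjacent in Γ to v_{i+1}) with p ≥ 2 such that no v_i with 0 < i < p lies in lk(lett(γ2)) ∪ B(g). -/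
/-- A Coxeter matrix is right-angled if all off-diagonal entries are `2` or `0`
(where `0` encodes `∞`). -/
def CoxeterMatrix.IsRightAngled {B : Type*} (M : CoxeterMatrix B) : Prop :=
  ∀ i j : B, i ≠ j → M i j = 2 ∨ M i j = 0

variable {B W : Type*} [Group W] {M : CoxeterMatrix B}

/-- Adjacency in the presentation graph `Γ(W,S)` of a right-angled Coxeter system:
two distinct generators are adjacent iff they commute. -/
def PresAdj (cs : CoxeterSystem M W) (a b : B) : Prop :=
  a ≠ b ∧ Commute (cs.simple a) (cs.simple b)

/-- There is a walk in the presentation graph from `a` to `b` all of whose vertices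
avoid the set `C`. -/
def JoinedOutside (cs : CoxeterSystem M W) (C : Set B) (a b : B) : Prop :=
  ∃ l : List B, l.Chain' (PresAdj cs) ∧ l.head? = some a ∧ l.getLast? = some b ∧
    ∀ v ∈ l, v ∉ C

/-- A set `C` of generators separates the presentation graph if the induced subgraph on the
complement of `C` is disconnected. -/
def SeparatesGraph (cs : CoxeterSystem M W) (C : Set B) : Prop :=
  ∃ a b : B, a ∉ C ∧ b ∉ C ∧ ¬ JoinedOutside cs C a b

/-- The link of a set `A` of generators: all generators distinct from and commuting with
every element of `A`. -/
def lk (cs : CoxeterSystem M W) (A : Set B) : Set B :=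
  {t : B | ∀ a ∈ A, a ≠ t ∧ Commute (cs.simple a) (cs.simple t)}

/-- A virtual factor separator for the system: a pair `(C, D)` with `D ⊆ C`, `C` separating
the presentation graph, `⟨C∖D⟩` finite and commuting elementwise with `D`, and two
non-commuting generators outside `D` commuting with every element of `D`. -/
def IsVirtualFactorSeparator (cs : CoxeterSystem M W) (C D : Set B) : Prop :=
  D ⊆ C ∧ SeparatesGraph cs C ∧
  ((Subgroup.closure (cs.simple '' (C \ D)) : Subgroup W) : Set W).Finite ∧
  (∀ c ∈ C \ D, ∀ d ∈ D, Commute (cs.simple c) (cs.simple d)) ∧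
  ∃ s t : B, s ∉ D ∧ t ∉ D ∧ ¬ Commute (cs.simple s) (cs.simple t) ∧
    ∀ d ∈ D, Commute (cs.simple s) (cs.simple d) ∧ Commute (cs.simple t) (cs.simple d)


/-!
In a right-angled Coxeter group, a right descent `r` of `π ω` (`ω` reduced) splits the word as
`ω = ω₁ ++ r :: ω₂` with every letter of `ω₂` commuting with `r`. The strong exchange condition,
obtained from the reflection cocycle on `W × ZMod 2`, gives such a splitting with `s r` commuting
with `π ω₂`; that `s g` commuting with the product of a reduced word commutes with each of its
letters is proved by induction on the length, the critical case being a word that can be rotated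
indefinitely, hence alternates between two non-commuting generators, which is impossible because
their product has infinite order.

Consequently the right descents of `g` pairwise commute and each lies in `lett(γ₂)` or in its
link. As `⟨lett(γ₂)⟩` is infinite, `γ₂` has two non-commuting letters, so for any separating
`C ⊆ lk(lett(γ₂)) ∪ B(g)` the pair `(C, C ∩ lk(lett(γ₂)))` would be a virtual factor separator.
Hence the complement of `lk(lett(γ₂)) ∪ B(g)` is connected, and every vertex has a neighbour in
it (otherwise its neighbours would separate it from a non-neighbour); this gives the walk.
-/

theorem List.eq_or_mem_or_mem_of_append_cons_eq {α : Type*} {l₁ l₂ l₁' l₂' : List α} {x y : α}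
    (h : l₁ ++ x :: l₂ = l₁' ++ y :: l₂') : x = y ∨ y ∈ l₂ ∨ x ∈ l₂' := by
  rcases List.append_eq_append_iff.mp h with ⟨_ | ⟨z, a'⟩, -, h'⟩ | ⟨_ | ⟨z, c'⟩, -, h'⟩
  · exact .inl (List.cons.inj h').1
  · obtain ⟨-, rfl⟩ := List.cons.inj h'
    simp
  · exact .inl (List.cons.inj h').1.symm
  · obtain ⟨-, rfl⟩ := List.cons.inj h'
    simp

theorem CoxeterMatrix.IsRightAngled.isLiftable (hra : M.IsRightAngled) {G : Type*} [Monoid G] {f : B → G} (hsq : ∀ i, f i * f i = 1)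
    (hcomm : ∀ i j, M i j = 2 → Commute (f i) (f j)) : M.IsLiftable f := by
  intro i j
  rcases eq_or_ne i j with rfl | hne
  · rw [M.diagonal, pow_one, hsq]
  rcases hra i j hne with h | h
  · rw [h, sq, (hcomm j i (M.symmetric i j ▸ h)).mul_mul_mul_comm, hsq, hsq, one_mul]
  · rw [h, pow_zero]

open scoped IsMulCommutative in
theorem Subgroup.closure_finite_of_pairwise_commute {G : Type*} [Group G] {S : Set G}
    (hS : S.Finite) (hcomm : S.Pairwise Commute) (htors : ∀ x ∈ S, IsOfFinOrder x) :
    (Subgroup.closure S : Set G).Finite := by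
  have := Subgroup.isMulCommutative_closure fun x hx y hy =>
    (eq_or_ne x y).elim (fun h => h ▸ rfl) (hcomm hx hy)
  have : Finite S := hS
  have htors' : ∀ x ∈ Subgroup.closure S, IsOfFinOrder x := by
    intro x hx
    induction hx using Subgroup.closure_induction with
    | mem x hx => exact htors x hx
    | one => exact IsOfFinOrder.one
    | mul x y hx hy hx' hy' =>
      have hxy : Commute x y :=
        congrArg Subtype.val (mul_comm (⟨x, hx⟩ : Subgroup.closure S) ⟨y, hy⟩)
      exact hxy.isOfFinOrder_mul hx' hy'
    | inv x _ hx' => exact hx'.inv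
  have : Finite (Subgroup.closure S) := CommGroup.finite_of_fg_isMulTorsion _
    fun x => Submonoid.isOfFinOrder_coe.mp (htors' x x.2)
  exact Set.toFinite _

namespace CoxeterSystem

variable (cs : CoxeterSystem M W)

local prefix:100 "s" => cs.simple
local prefix:100 "π" => cs.wordProd
local prefix:100 "ris" => cs.rightInvSeq

theorem commute_simple_of_M_eq_two {i j : B} (h : M i j = 2) : Commute (s i) (s j) := by
  have hpow := cs.simple_mul_simple_pow i j
  rw [h, sq, mul_eq_one_iff_eq_inv, mul_inv_rev, inv_simple, inv_simple] at hpow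
  exact hpow

theorem M_eq_zero_of_not_commute (hra : M.IsRightAngled) {i j : B}
    (h : ¬Commute (s i) (s j)) : M i j = 0 :=
  (hra i j fun hij => h (hij ▸ Commute.refl _)).resolve_left
    fun h2 => h (cs.commute_simple_of_M_eq_two h2)

theorem eq_of_conj_simple_eq (hra : M.IsRightAngled) {w : W} {i j : B}
    (h : w⁻¹ * s i * w = s j) : i = j := by
  classical
  let φ : W →* Multiplicative (B → ZMod 2) := cs.lift ⟨fun i => .ofAdd (Pi.single i 1),
    hra.isLiftable (fun i => by
      rw [← ofAdd_add, ← Pi.single_add, (by decide : (1 + 1 : ZMod 2) = 0), Pi.single_zero,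
        ofAdd_zero])
      fun _ _ _ => Commute.all _ _⟩
  have hφ := congrArg φ h
  simp only [map_mul, map_inv, inv_mul_cancel_comm, φ, lift_apply_simple] at hφ
  by_contra hij
  simpa [Pi.single_apply, Ne.symm hij] using congrFun (Multiplicative.ofAdd.injective hφ) i

theorem orderOf_simple_mul_simple_eq_zero (hra : M.IsRightAngled) {a b : B} (hab : M a b = 0) :
    orderOf (s a * s b) = 0 := by
  classical
  have hne : a ≠ b := by rintro rfl; simp at hab
  let f : B → DihedralGroup 0 := fun i => if i = a then .sr 0 else if i = b then .sr 1 else 1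
  have hsq : ∀ i, f i * f i = 1 := fun i => by simp only [f]; split_ifs <;> simp
  have hcomm : ∀ i j, M i j = 2 → Commute (f i) (f j) := by
    intro i j hij
    by_cases hi : i = a ∨ i = b
    · by_cases hj : j = a ∨ j = b
      · rcases hi with rfl | rfl <;> rcases hj with rfl | rfl <;>
          simp_all [M.symmetric]
      · simp only [f, not_or.mp hj, if_false, Commute.one_right]
    · simp only [f, not_or.mp hi, if_false, Commute.one_left]
  let φ := cs.lift ⟨f, hra.isLiftable hsq hcomm⟩
  have hφ : φ (s a * s b) = DihedralGroup.r 1 := by simp [φ, f, hne.symm]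
  have := orderOf_map_dvd φ (s a * s b)
  rwa [hφ, DihedralGroup.orderOf_r_one, zero_dvd_iff] at this

theorem simple_mul_mul_simple_eq_iff (i : B) (t u : W) :
    s i * t * s i = u ↔ t = s i * u * s i := by
  constructor <;> rintro rfl <;> simp [mul_assoc]

open Classical in
/-- Generator of the reflection cocycle representation: by `reflectionRep_wordProd`, the parity
of the number of occurrences of `t` in `ris ω` depends only on `π ω`. -/
noncomputable def reflectionFlip (i : B) (p : W × ZMod 2) : W × ZMod 2 :=
  (s i * p.1 * s i, p.2 + if p.1 = s i then 1 else 0)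

theorem reflectionFlip_involutive (i : B) : Function.Involutive (cs.reflectionFlip i) := by
  rintro ⟨t, e⟩
  have hconj : s i * t * s i = s i ↔ t = s i := by
    rw [simple_mul_mul_simple_eq_iff]; simp
  have hfst : s i * (s i * t * s i) * s i = t := by simp [mul_assoc]
  by_cases h : t = s i
  · simp [reflectionFlip, h, add_assoc, (by decide : (1 + 1 : ZMod 2) = 0)]
  · simp [reflectionFlip, h, hconj, hfst]

theorem reflectionFlip_comm {i j : B} (hij : Commute (s i) (s j)) (p : W × ZMod 2) :
    cs.reflectionFlip i (cs.reflectionFlip j p) = cs.reflectionFlip j (cs.reflectionFlip i p) := by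
  classical
  obtain ⟨t, e⟩ := p
  have hi : s j * t * s j = s i ↔ t = s i := by
    rw [simple_mul_mul_simple_eq_iff, ← hij.eq, mul_assoc, simple_mul_simple_self, mul_one]
  have hj : s i * t * s i = s j ↔ t = s j := by
    rw [simple_mul_mul_simple_eq_iff, hij.eq, mul_assoc, simple_mul_simple_self, mul_one]
  refine Prod.ext ?_ ?_
  · simp only [reflectionFlip]
    rw [show s i * (s j * t * s j) * s i = (s i * s j) * t * (s j * s i) by group,
      show s j * (s i * t * s i) * s j = (s j * s i) * t * (s i * s j) by group, hij.eq]
  · simp only [reflectionFlip, hi, hj]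
    abel

noncomputable def reflectionRep (hra : M.IsRightAngled) : W →* Equiv.Perm (W × ZMod 2) :=
  cs.lift ⟨fun i => (cs.reflectionFlip_involutive i).toPerm,
    hra.isLiftable (fun i => Equiv.ext (cs.reflectionFlip_involutive i))
      fun _ _ hij => Equiv.ext (cs.reflectionFlip_comm (cs.commute_simple_of_M_eq_two hij))⟩

open Classical in
theorem reflectionRep_wordProd (hra : M.IsRightAngled) (ω : List B) (t : W) (e : ZMod 2) :
    cs.reflectionRep hra (π ω) (t, e) = (π ω * t * (π ω)⁻¹, e + (ris ω).count t) := by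
  induction ω with
  | nil => simp
  | cons i ω ih =>
    rw [wordProd_cons, map_mul, Equiv.Perm.mul_apply, ih]
    have hcond : π ω * t * (π ω)⁻¹ = s i ↔ (π ω)⁻¹ * s i * π ω = t := by
      constructor <;> intro h <;> rw [← h] <;> group
    simp only [reflectionRep, lift_apply_simple, Function.Involutive.coe_toPerm, reflectionFlip,
      rightInvSeq, List.count_cons, beq_iff_eq, hcond, mul_inv_rev, inv_simple, Prod.mk.injEq]
    exact ⟨by group, by push_cast; abel⟩

open Classical in
theorem count_rightInvSeq_eq_of_wordProd_eq (hra : M.IsRightAngled) {ω ω' : List B}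
    (h : π ω = π ω') (t : W) : ((ris ω).count t : ZMod 2) = (ris ω').count t := by
  simpa [reflectionRep_wordProd] using congrArg (fun w => (cs.reflectionRep hra w (t, 0)).2) h

theorem simple_mem_rightInvSeq (hra : M.IsRightAngled) {ω : List B} {r : B}
    (hr : cs.IsRightDescent (π ω) r) : s r ∈ ris ω := by
  classical
  obtain ⟨ω', hω', hω'eq⟩ := cs.exists_isReduced (π ω * s r)
  have hnot : s r ∉ ris ω' := fun hmem => by
    have := (cs.isRightInversion_of_mem_rightInvSeq hω' hmem).2
    rw [← hω'eq, simple_mul_simple_cancel_right] at this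
    exact lt_asymm this hr
  -- `ω'.concat r` is another word for `π ω`, with `s r` occurring once in its inversion sequence
  have hprod : π (ω'.concat r) = π ω := by
    rw [wordProd_concat, ← hω'eq, simple_mul_simple_cancel_right]
  have hcount : (ris (ω'.concat r)).count (s r) = 1 := by
    have hmap := List.count_map_of_injective (ris ω') _ (MulAut.conj (s r)).injective (s r)
    rw [show MulAut.conj (s r) (s r) = s r by simp] at hmap
    rw [rightInvSeq_concat, List.concat_eq_append, List.count_append, hmap,
      List.count_eq_zero.mpr hnot]
    simp
  have hpar := cs.count_rightInvSeq_eq_of_wordProd_eq hra hprod (s r)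
  rw [hcount] at hpar
  by_contra hmem
  rw [List.count_eq_zero.mpr hmem] at hpar
  exact one_ne_zero (by exact_mod_cast hpar)

theorem exists_eq_append_cons_commute (hra : M.IsRightAngled) {ω : List B} {r : B}
    (hr : cs.IsRightDescent (π ω) r) :
    ∃ ω₁ ω₂, ω = ω₁ ++ r :: ω₂ ∧ Commute (s r) (π ω₂) := by
  obtain ⟨j, hj, hget⟩ := List.mem_iff_getElem.mp (cs.simple_mem_rightInvSeq hra hr)
  rw [length_rightInvSeq] at hj
  rw [getElem_rightInvSeq _ _ _ hj, List.getElem?_eq_getElem hj] at hget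
  set v := π (ω.drop (j + 1))
  have hconj : v⁻¹ * s ω[j] * v = s r := hget
  obtain rfl := cs.eq_of_conj_simple_eq hra hconj
  refine ⟨ω.take j, ω.drop (j + 1), by rw [List.getElem_cons_drop, List.take_append_drop], ?_⟩
  calc s ω[j] * v = v * (v⁻¹ * s ω[j] * v) := by group
    _ = v * s ω[j] := by rw [hconj]

theorem not_commute_simple_pow (hra : M.IsRightAngled) {a b : B} (hab : ¬Commute (s a) (s b))
    {m : ℕ} (hm : m ≠ 0) : ¬Commute (s a) ((s b * s a) ^ m) := by
  intro h
  set x := s b * s a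
  have hx : MulAut.conj (s a) x = x⁻¹ := by simp [x, mul_assoc]
  have hxm : x ^ m = (x ^ m)⁻¹ := by
    rw [← inv_pow, ← hx, ← map_pow, MulAut.conj_apply, h.eq, mul_inv_cancel_right]
  have hord := cs.orderOf_simple_mul_simple_eq_zero hra
    (cs.M_eq_zero_of_not_commute hra fun h' => hab h'.symm)
  exact orderOf_eq_zero_iff'.mp hord (2 * m) (by omega)
    (by rw [mul_comm, pow_mul, sq]; nth_rw 2 [hxm]; exact mul_inv_cancel _)

theorem isRightDescent_of_commute_wordProd {σ : List B} {a b : B}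
    (hred : cs.IsReduced (σ ++ [b, a])) (hcomm : Commute (s a) (π (σ ++ [b, a]))) :
    cs.IsRightDescent (π (σ ++ [b, a])) b := by
  have hprod : π (σ ++ [b, a]) * s b = π (a :: σ) := by
    calc π (σ ++ [b, a]) * s b = s a * (π (σ ++ [b, a]) * s a) * s b := by
          rw [← hcomm.eq, ← mul_assoc, simple_mul_simple_self, one_mul]
      _ = π (a :: σ) := by simp [wordProd_append, wordProd_cons, mul_assoc]
  unfold IsRightDescent
  rw [hprod, hred]
  exact (cs.length_wordProd_le _).trans_lt (by simp)

/-- The exchange position of `b` is the first letter, since at any later position `ih` would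
make `b` commute with the last letter `a`; moving that `b` to the end rotates the word. -/
theorem exists_rotate_of_commute_wordProd (hra : M.IsRightAngled) {n : ℕ}
    (ih : ∀ ω : List B, ω.length < n → cs.IsReduced ω →
      ∀ g, Commute (s g) (π ω) → ∀ a ∈ ω, Commute (s g) (s a))
    {σ : List B} {a b : B} (hlen : (σ ++ [b, a]).length = n + 1)
    (hred : cs.IsReduced (σ ++ [b, a])) (hcomm : Commute (s a) (π (σ ++ [b, a])))
    (hab : ¬Commute (s a) (s b)) :
    ∃ σ', σ ++ [b, a] = b :: (σ' ++ [a]) ∧ cs.IsReduced (σ' ++ [a, b]) ∧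
      Commute (s b) (π (σ' ++ [a, b])) := by
  obtain ⟨ρ₁, ρ₂, hsplit, hb⟩ := cs.exists_eq_append_cons_commute hra
    (cs.isRightDescent_of_commute_wordProd hred hcomm)
  have ha : a ∈ ρ₂ := by
    rcases List.eq_or_mem_or_mem_of_append_cons_eq
      (hsplit.symm.trans (by simp : σ ++ [b, a] = (σ ++ [b]) ++ [a])) with rfl | h | h
    · exact absurd (Commute.refl _) hab
    · exact h
    · simp at h
  obtain rfl : ρ₁ = [] := by
    rcases ρ₁ with _ | ⟨c, ρ₁⟩
    · rfl
    have hlen₂ : ρ₂.length < n := by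
      have := congrArg List.length hsplit
      simp only [List.length_append, List.length_cons] at this hlen
      omega
    exact absurd (ih ρ₂ hlen₂ (by simpa [hsplit] using hred.drop (ρ₁.length + 2)) b hb a ha).symm
      hab
  rw [List.nil_append] at hsplit
  obtain ⟨σ', rfl⟩ : ∃ σ', ρ₂ = σ' ++ [a] := by
    cases σ with
    | nil => exact ⟨[], by simpa using hsplit.symm⟩
    | cons c σ => exact ⟨σ ++ [b], by simp_all⟩
  have hprod : π (σ' ++ [a, b]) = π (σ ++ [b, a]) := by
    calc π (σ' ++ [a, b]) = π (σ' ++ [a]) * s b := by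
          rw [← wordProd_concat, List.concat_eq_append, List.append_assoc]; rfl
      _ = π (σ ++ [b, a]) := by rw [hsplit, wordProd_cons, hb.eq]
  refine ⟨σ', hsplit, ?_, ?_⟩
  · rw [IsReduced, hprod, hred, hsplit]
    simp
  · rw [hprod, hsplit, wordProd_cons]
    exact (Commute.refl _).mul_right hb

theorem getElem_eq_of_commute_wordProd (hra : M.IsRightAngled) {n : ℕ}
    (ih : ∀ ω : List B, ω.length < n → cs.IsReduced ω →
      ∀ g, Commute (s g) (π ω) → ∀ a ∈ ω, Commute (s g) (s a)) (i : ℕ) :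
    ∀ {σ : List B} {a b : B}, (σ ++ [b, a]).length = n + 1 → cs.IsReduced (σ ++ [b, a]) →
      Commute (s a) (π (σ ++ [b, a])) → ¬Commute (s a) (s b) →
      ∀ j (hj : j < (σ ++ [b, a]).length), j < i →
        (σ ++ [b, a])[j] = if Even j then b else a := by
  induction i with
  | zero => intros; omega
  | succ i ihi =>
    intro σ a b hlen hred hcomm hab j hj hji
    obtain ⟨σ', hρ, hred', hcomm'⟩ :=
      cs.exists_rotate_of_commute_wordProd hra ih hlen hred hcomm hab
    have halt := ihi (by rw [← hlen, hρ]; simp) hred' hcomm' fun h => hab h.symm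
    rw [List.getElem_of_eq hρ]
    cases j with
    | zero => simp
    | succ j =>
      have hj' : j < (σ' ++ [a]).length := by simp [hρ] at hj; simpa using hj
      have := halt j (by simpa using hj'.trans_le (by simp)) (by omega)
      rw [List.getElem_of_eq (by simp : σ' ++ [a, b] = σ' ++ [a] ++ [b]),
        List.getElem_append_left hj'] at this
      rw [List.getElem_cons_succ, this]
      by_cases hje : Even j <;> simp [hje, Nat.even_add_one]

theorem commute_of_commute_wordProd_append_pair (hra : M.IsRightAngled) {n : ℕ}
    (ih : ∀ ω : List B, ω.length < n → cs.IsReduced ω →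
      ∀ g, Commute (s g) (π ω) → ∀ a ∈ ω, Commute (s g) (s a))
    {σ : List B} {a b : B} (hlen : (σ ++ [b, a]).length = n + 1)
    (hred : cs.IsReduced (σ ++ [b, a])) (hcomm : Commute (s a) (π (σ ++ [b, a]))) :
    Commute (s a) (s b) := by
  -- otherwise the word alternates, so its product is a power of `s b * s a`
  by_contra hab
  have halt := fun j hj =>
    cs.getElem_eq_of_commute_wordProd hra ih (n + 1) hlen hred hcomm hab j hj (hlen ▸ hj)
  have hσ : σ.length + 1 = n := by simp at hlen; omega
  have hn : Even (n + 1) := by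
    by_contra hodd
    have hev : Even n := by simpa [Nat.even_add_one] using hodd
    have h := halt n (by omega)
    rw [List.getElem_append_right (by omega)] at h
    simp only [show n - σ.length = 1 by omega, hev, if_true] at h
    exact hab (by simp at h; rw [h])
  have hρ : σ ++ [b, a] = alternatingWord b a (n + 1) := by
    refine List.ext_getElem (by simp [hlen]) fun k h₁ _ => ?_
    rw [halt k h₁, getElem_alternatingWord _ _ _ _ (by omega)]
    by_cases hk : Even k <;> simp [hk, Nat.even_add, hn]
  refine cs.not_commute_simple_pow hra hab (m := (n + 1) / 2) (by omega) ?_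
  rwa [hρ, prod_alternatingWord_eq_mul_pow, if_pos hn, one_mul] at hcomm

theorem commute_simple_of_commute_wordProd (hra : M.IsRightAngled) {ω : List B}
    (hω : cs.IsReduced ω) {g : B} (h : Commute (s g) (π ω)) : ∀ a ∈ ω, Commute (s g) (s a) := by
  induction hn : ω.length using Nat.strong_induction_on generalizing ω g with
  | _ n ih =>
  have ih' : ∀ ω : List B, ω.length < n → cs.IsReduced ω →
      ∀ g, Commute (s g) (π ω) → ∀ a ∈ ω, Commute (s g) (s a) :=
    fun ω hlt hω g h => ih _ hlt hω h rfl
  rcases ω.eq_nil_or_concat with rfl | ⟨Y, x, rfl⟩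
  · simp
  rw [List.concat_eq_append] at *
  have hx : Commute (s g) (s x) := by
    by_cases hdesc : cs.IsRightDescent (π (Y ++ [x])) g
    · obtain ⟨ω₁, ω₂, hsplit, hcomm⟩ := cs.exists_eq_append_cons_commute hra hdesc
      rcases List.eq_or_mem_or_mem_of_append_cons_eq (l₂' := []) hsplit.symm with rfl | hx | hx
      · exact Commute.refl _
      · refine ih' ω₂ ?_ (by simpa [hsplit] using hω.drop (ω₁.length + 1)) g hcomm x hx
        have := congrArg List.length hsplit
        simp at this hn
        omega
      · simp at hx
    · have hred : cs.IsReduced (Y ++ [x, g]) := by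
        rw [IsReduced, show Y ++ [x, g] = Y ++ [x] ++ [g] by simp, wordProd_append,
          wordProd_singleton, (cs.not_isRightDescent_iff).mp hdesc, hω]
        simp
      exact cs.commute_of_commute_wordProd_append_pair hra ih' (by simpa using hn) hred
        (by simpa [wordProd_append, wordProd_cons, mul_assoc] using
          h.mul_right (Commute.refl (s g)))
  have hY : Commute (s g) (π Y) := by
    simpa [wordProd_append, mul_assoc] using h.mul_right hx
  intro a ha
  rcases List.mem_append.mp ha with ha | ha
  · exact ih' Y (by simp at hn; omega) (by simpa using hω.take Y.length) g hY a ha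
  · rw [List.mem_singleton.mp ha]
    exact hx

theorem exists_eq_append_cons_forall_commute (hra : M.IsRightAngled) {ω : List B}
    (hω : cs.IsReduced ω) {r : B} (hr : cs.IsRightDescent (π ω) r) :
    ∃ ω₁ ω₂, ω = ω₁ ++ r :: ω₂ ∧ ∀ a ∈ ω₂, Commute (s r) (s a) := by
  obtain ⟨ω₁, ω₂, rfl, h⟩ := cs.exists_eq_append_cons_commute hra hr
  exact ⟨ω₁, ω₂, rfl, cs.commute_simple_of_commute_wordProd hra
    (by simpa using hω.drop (ω₁.length + 1)) h⟩

theorem commute_of_isRightDescent (hra : M.IsRightAngled) {w : W} {r r' : B}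
    (hr : cs.IsRightDescent w r) (hr' : cs.IsRightDescent w r') : Commute (s r) (s r') := by
  obtain ⟨ω, hω, rfl⟩ := cs.exists_isReduced w
  obtain ⟨ω₁, ω₂, hsplit, h⟩ := cs.exists_eq_append_cons_forall_commute hra hω hr
  obtain ⟨ω₁', ω₂', hsplit', h'⟩ := cs.exists_eq_append_cons_forall_commute hra hω hr'
  rcases List.eq_or_mem_or_mem_of_append_cons_eq (hsplit.symm.trans hsplit') with rfl | hm | hm
  · exact Commute.refl _
  · exact h r' hm
  · exact (h' r hm).symm

theorem mem_or_mem_lk_of_isRightDescent (hra : M.IsRightAngled) {γ₁ γ₂ : List B}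
    (hred : cs.IsReduced (γ₁ ++ γ₂)) {r : B} (hr : cs.IsRightDescent (π (γ₁ ++ γ₂)) r) :
    r ∈ γ₂ ∨ r ∈ lk cs {x | x ∈ γ₂} := by
  obtain ⟨ω₁, ω₂, hsplit, h⟩ := cs.exists_eq_append_cons_forall_commute hra hred hr
  by_cases hrγ : r ∈ γ₂
  · exact .inl hrγ
  refine .inr fun a ha => ⟨fun har => hrγ (har ▸ ha), (h a ?_).symm⟩
  rcases List.append_eq_append_iff.mp hsplit with ⟨a', -, rfl⟩ | ⟨_ | ⟨z, c'⟩, -, h'⟩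
  · simp at hrγ
  · rw [List.nil_append] at h'
    exact absurd (h' ▸ List.mem_cons_self) hrγ
  · obtain ⟨-, rfl⟩ := List.cons.inj h'
    exact List.mem_append_right _ ha

theorem closure_simple_image_finite {A : Set B} (hA : A.Finite)
    (hcomm : ∀ a ∈ A, ∀ b ∈ A, Commute (s a) (s b)) :
    (Subgroup.closure (cs.simple '' A) : Set W).Finite := by
  refine Subgroup.closure_finite_of_pairwise_commute (hA.image _) ?_ ?_
  · rintro _ ⟨a, ha, rfl⟩ _ ⟨b, hb, rfl⟩ -
    exact hcomm a ha b hb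
  · rintro _ ⟨a, -, rfl⟩
    exact isOfFinOrder_iff_pow_eq_one.mpr ⟨2, two_pos, by rw [sq, simple_mul_simple_self]⟩

theorem isVirtualFactorSeparator_inter_lk (hra : M.IsRightAngled) {A : Set B} (hA : A.Finite)
    {w : W} (hdesc : ∀ r, cs.IsRightDescent w r → r ∈ A ∨ r ∈ lk cs A) {a b : B}
    (ha : a ∈ A) (hb : b ∈ A) (hab : ¬Commute (s a) (s b)) {C : Set B}
    (hC : C ⊆ lk cs A ∪ {r | cs.IsRightDescent w r}) (hsep : SeparatesGraph cs C) :
    IsVirtualFactorSeparator cs C (C ∩ lk cs A) := by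
  have hnotlk : ∀ x ∈ A, x ∉ lk cs A := fun x hx h => (h x hx).1 rfl
  have hdiff : ∀ c ∈ C \ (C ∩ lk cs A), c ∈ A ∧ cs.IsRightDescent w c := by
    rintro c ⟨hcC, hcD⟩
    have hclk : c ∉ lk cs A := fun h => hcD ⟨hcC, h⟩
    have hcw : cs.IsRightDescent w c := (hC hcC).resolve_left hclk
    exact ⟨(hdesc c hcw).resolve_right hclk, hcw⟩
  refine ⟨Set.inter_subset_left, hsep, ?_, fun c hc d hd => (hd.2 c (hdiff c hc).1).2,
    a, b, fun h => hnotlk a ha h.2, fun h => hnotlk b hb h.2, hab,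
    fun d hd => ⟨(hd.2 a ha).2, (hd.2 b hb).2⟩⟩
  exact cs.closure_simple_image_finite (hA.subset fun c hc => (hdiff c hc).1)
    fun c hc c' hc' => cs.commute_of_isRightDescent hra (hdiff c hc).2 (hdiff c' hc').2

theorem exists_not_mem_lk_union_not_commute (hra : M.IsRightAngled) {A : Set B} {w : W}
    {a b : B} (ha : a ∈ A) (hb : b ∈ A) (hab : ¬Commute (s a) (s b)) :
    ∃ c ∉ lk cs A ∪ {r | cs.IsRightDescent w r}, ∃ c', ¬Commute (s c) (s c') := by
  by_cases haw : cs.IsRightDescent w a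
  · refine ⟨b, ?_, a, fun h => hab h.symm⟩
    rintro (h | h)
    · exact (h b hb).1 rfl
    · exact hab (cs.commute_of_isRightDescent hra haw h)
  · refine ⟨a, ?_, b, hab⟩
    rintro (h | h)
    · exact (h a ha).1 rfl
    · exact haw h

theorem exists_presAdj_not_mem {C : Set B} (hC : ∀ C' ⊆ C, ¬SeparatesGraph cs C')
    (hc : ∃ c ∉ C, ∃ c', ¬Commute (s c) (s c')) (u : B) : ∃ v, PresAdj cs u v ∧ v ∉ C := by
  by_contra! hu
  obtain ⟨c, hcC, c', hcc'⟩ := hc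
  have hall : ∀ w ≠ u, PresAdj cs u w := by
    intro w hwu
    by_contra hw
    refine hC {v | PresAdj cs u v} hu ⟨u, w, fun h => h.1 rfl, hw, ?_⟩
    rintro ⟨_ | ⟨u', _ | ⟨v, l⟩⟩, hch, hhd, hlast, hout⟩
    · simp at hhd
    · simp only [List.head?_cons, List.getLast?_singleton, Option.some.injEq] at hhd hlast
      exact hwu (hlast ▸ hhd)
    · simp only [List.head?_cons, Option.some.injEq] at hhd
      subst hhd
      exact hout v (by simp) (List.isChain_cons_cons.mp hch).1
  obtain rfl : c = u := by
    by_contra h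
    exact hcC (hu c (hall c h))
  exact hcc' (hall c' fun h => hcc' (h ▸ Commute.refl _)).2

theorem exists_walk_of_not_separatesGraph {C : Set B} (hC : ¬SeparatesGraph cs C)
    (hnbr : ∀ u, ∃ v, PresAdj cs u v ∧ v ∉ C) (a b : B) :
    ∃ l : List B, l.IsChain (PresAdj cs) ∧ l.head? = some a ∧ l.getLast? = some b ∧
      3 ≤ l.length ∧ ∀ v ∈ (l.drop 1).dropLast, v ∉ C := by
  obtain ⟨a', ha', ha'C⟩ := hnbr a
  obtain ⟨b', hb', hb'C⟩ := hnbr b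
  have hjoin : JoinedOutside cs C a' b' := by
    by_contra h
    exact hC ⟨a', b', ha'C, hb'C, h⟩
  obtain ⟨l, hch, hhd, hlast, hout⟩ := hjoin
  have hl : l ≠ [] := by rintro rfl; simp at hhd
  refine ⟨a :: l ++ [b], ?_, rfl, List.getLast?_concat, ?_, by simpa using hout⟩
  · rw [List.isChain_append, List.isChain_cons]
    refine ⟨⟨by simpa [hhd] using ha', hch⟩, List.isChain_singleton b, ?_⟩
    intro x hx y hy
    simp only [List.getLast?_cons, hlast, Option.getD_some, Option.mem_some_iff,
      List.head?_cons] at hx hy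
    subst hx hy
    exact ⟨hb'.1.symm, hb'.2.symm⟩
  · have := List.length_pos_iff.mpr hl
    simp
    omega

end CoxeterSystem

theorem avoidlink_general (cs : CoxeterSystem M W) (hra : M.IsRightAngled)
    (hnvfs : ∀ C D : Set B, ¬ IsVirtualFactorSeparator cs C D)
    (g : W) (γ₁ γ₂ : List B)
    (hred : cs.IsReduced (γ₁ ++ γ₂)) (hg : cs.wordProd (γ₁ ++ γ₂) = g)
    (hinf : ((Subgroup.closure (cs.simple '' {x : B | x ∈ γ₂}) : Subgroup W) :
      Set W).Infinite)
    (s t : B) :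
    ∃ l : List B, l.Chain' (PresAdj cs) ∧ l.head? = some s ∧ l.getLast? = some t ∧
      3 ≤ l.length ∧
      ∀ v ∈ (l.drop 1).dropLast,
        v ∉ lk cs {x : B | x ∈ γ₂} ∪ {x : B | cs.IsRightDescent g x} := by
  subst hg
  obtain ⟨a, ha, b, hb, hab⟩ :
      ∃ a ∈ γ₂, ∃ b ∈ γ₂, ¬Commute (cs.simple a) (cs.simple b) := by
    by_contra! h
    exact hinf (cs.closure_simple_image_finite (List.finite_toSet γ₂) h)
  have hsep : ∀ C ⊆ lk cs {x | x ∈ γ₂} ∪ {x | cs.IsRightDescent (cs.wordProd (γ₁ ++ γ₂)) x},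
      ¬SeparatesGraph cs C := fun C hC hsep =>
    hnvfs C _ (cs.isVirtualFactorSeparator_inter_lk hra (List.finite_toSet γ₂)
      (fun _ hr => cs.mem_or_mem_lk_of_isRightDescent hra hred hr) ha hb hab hC hsep)
  exact cs.exists_walk_of_not_separatesGraph (hsep _ subset_rfl)
    (cs.exists_presAdj_not_mem hsep (cs.exists_not_mem_lk_union_not_commute hra ha hb hab)) s t

/-- Lemma 4.16 ('avoidlink'): if `W` is one-ended (no complete subgraph separates `Γ`) and
`(W,S)` has no virtual factor separator, `γ₁ ++ γ₂` is a reduced word for `g` with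
`⟨lett(γ₂)⟩` infinite, and `s, t` are not right descents of `g`, then there is a walk in `Γ`
from `s` to `t` of length at least two, none of whose interior vertices lies in
`lk(lett(γ₂)) ∪ B(g)`. -/
theorem avoidlink [Fintype B] (cs : CoxeterSystem M W) (hra : M.IsRightAngled)
    (hone : ∀ T : Set B, T.Pairwise (PresAdj cs) → ¬ SeparatesGraph cs T)
    (hnvfs : ∀ C D : Set B, ¬ IsVirtualFactorSeparator cs C D)
    (g : W) (γ₁ γ₂ : List B)
    (hred : cs.IsReduced (γ₁ ++ γ₂)) (hg : cs.wordProd (γ₁ ++ γ₂) = g)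
    (hinf : ((Subgroup.closure (cs.simple '' {x : B | x ∈ γ₂}) : Subgroup W) :
      Set W).Infinite)
    (s t : B) (hs : ¬ cs.IsRightDescent g s) (ht : ¬ cs.IsRightDescent g t) :
    ∃ l : List B, l.Chain' (PresAdj cs) ∧ l.head? = some s ∧ l.getLast? = some t ∧
      3 ≤ l.length ∧
      ∀ v ∈ (l.drop 1).dropLast,
        v ∉ lk cs {x : B | x ∈ γ₂} ∪ {x : B | cs.IsRightDescent g x} :=
  avoidlink_general cs hra hnvfs g γ₁ γ₂ hred hg hinf s t
end

section
/- Let (W,S) be a right-angled Coxeter system, let [a1,...,an] be a word in S, and let 1 ≤ i < j ≤ n. If a1⋯an = a1⋯a_{i-1}·a_{i+1}⋯a_{j-1}·a_{j+1}⋯a_n in W (i.e., the letters a_i and a_j delete), then a_i = a_j. -/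
theorem List.mul_mul_prod_eraseIdx_eraseIdx {M : Type*} [CommMonoid M] {l : List M} {i j : ℕ}
    (hij : i < j) (hj : j < l.length) :
    l[i] * l[j] * ((l.eraseIdx j).eraseIdx i).prod = l.prod := by
  have hi : i < (l.eraseIdx j).length := by rw [List.length_eraseIdx_of_lt hj]; omega
  rw [← List.CommMonoid.mul_prod_eraseIdx hj, ← List.CommMonoid.mul_prod_eraseIdx hi,
    List.getElem_eraseIdx_of_lt hi hij, mul_left_comm, mul_assoc]

theorem Finsupp.eq_of_single_add_single_eq_zero {α R : Type*} [AddZeroClass R] {a b : α} {r : R}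
    (hr : r ≠ 0) (h : single a r + single b r = 0) : a = b := by
  by_contra hab
  simpa [Finsupp.single_eq_of_ne hab, hr] using congr($h a)

theorem CoxeterMatrix.IsRightAngled.even {B : Type*} {M : CoxeterMatrix B}
    (hM : M.IsRightAngled) {b b' : B} (h : b ≠ b') : Even (M b b') := by
  rcases hM b b' h with h2 | h0
  · exact h2 ▸ even_two
  · exact h0 ▸ Even.zero

theorem CoxeterMatrix.isLiftable_ofAdd_single {B : Type*} {M : CoxeterMatrix B}
    (hM : ∀ b b', b ≠ b' → Even (M b b')) :
    M.IsLiftable fun b ↦ Multiplicative.ofAdd (Finsupp.single b (1 : ZMod 2)) := by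
  have hsq (x : Multiplicative (B →₀ ZMod 2)) : x ^ 2 = 1 := by
    rw [← ofAdd_toAdd x, ← ofAdd_nsmul, ZModModule.char_nsmul_eq_zero, ofAdd_zero]
  intro b b'
  rcases eq_or_ne b b' with rfl | hne
  · rw [M.diagonal, pow_one, ← sq, hsq]
  · obtain ⟨k, hk⟩ := (hM b b' hne).two_dvd
    rw [hk, pow_mul, hsq, one_pow]

namespace CoxeterSystem

variable {B W : Type*} [Group W] {M : CoxeterMatrix B} (cs : CoxeterSystem M W)
  (hM : ∀ b b', b ≠ b' → Even (M b b'))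

noncomputable def letterParity : W →* Multiplicative (B →₀ ZMod 2) :=
  cs.lift ⟨_, M.isLiftable_ofAdd_single hM⟩

theorem letterParity_simple (b : B) :
    cs.letterParity hM (cs.simple b) = Multiplicative.ofAdd (Finsupp.single b 1) :=
  cs.lift_apply_simple _ b

theorem letterParity_wordProd (ω : List B) :
    cs.letterParity hM (cs.wordProd ω) =
      (ω.map fun b ↦ Multiplicative.ofAdd (Finsupp.single b 1)).prod := by
  simp only [wordProd, map_list_prod, List.map_map, Function.comp_def, letterParity_simple]

end CoxeterSystem

/-- Lemma 2.15 ('sameletter'): in a right-angled Coxeter system, if two letters of a word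
delete (removing both does not change the product), then the two letters are equal. -/
theorem sameletter {B W : Type*} [Group W] {M : CoxeterMatrix B}
    (cs : CoxeterSystem M W) (hra : M.IsRightAngled) (ω : List B)
    (i j : Fin ω.length) (hij : i < j)
    (h : cs.wordProd ω = cs.wordProd ((ω.eraseIdx j.val).eraseIdx i.val)) :
    ω.get i = ω.get j := by
  have hπ := congrArg (cs.letterParity fun _ _ ↦ hra.even) h
  rw [cs.letterParity_wordProd, cs.letterParity_wordProd, ← List.eraseIdx_map,
    ← List.eraseIdx_map, ← List.mul_mul_prod_eraseIdx_eraseIdx hij (by simp)] at hπ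
  have hsingles := congrArg Multiplicative.toAdd (mul_eq_right.mp hπ)
  simp only [List.getElem_map, toAdd_mul, toAdd_ofAdd, toAdd_one] at hsingles
  exact Finsupp.eq_of_single_add_single_eq_zero one_ne_zero hsingles
end
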